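/- arXiv:2406.06152 — 5 statements merged into one kernel-verified Lean document; each statement's English description precedes it below -/
import Mathlib

section
/- Let S ⊆ ℤ² be a nonempty bounded M♮-convex set, and let λ₁ = min_{x∈S} x¹, μ₁ = max_{x∈S} x¹, λ₂ = min_{x∈S} x², μ₂ = max_{x∈S} x², λ₀ = min_{x∈S} (x¹+x²), μ₀ = max_{x∈S} (x¹+x²). Then S = { x ∈ ℤ² : λ₁ ≤ x¹ ≤ μ₁, λ₂ ≤ x² ≤ μ₂, λ₀ ≤ x¹+x² ≤ μ₀ }. -/
open Finset

/-- Embedding of `ℤ²` into `ℝ²`. -/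
def toR (x : Fin 2 → ℤ) : Fin 2 → ℝ := fun j => (x j : ℝ)

/-- `chi none = χ₀` is the zero vector, `chi (some i) = χ_i` is the `i`-th unit vector. -/
def chi : Option (Fin 2) → (Fin 2 → ℤ)
  | none => 0
  | some i => Pi.single i 1

/-- A set `S ⊆ ℤ²` is M♮-convex if for all `x, y ∈ S` and every index `i` with `x^i > y^i`
there exists `j` with `x^j < y^j` or `j = 0` such that `x − χ_i + χ_j ∈ S` and
`y + χ_i − χ_j ∈ S`. -/
def MnConvexSet (S : Set (Fin 2 → ℤ)) : Prop :=
  ∀ x ∈ S, ∀ y ∈ S, ∀ i : Fin 2, y i < x i →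
    ∃ j : Option (Fin 2), (∀ j', j = some j' → x j' < y j') ∧
      x - Pi.single i 1 + chi j ∈ S ∧ y + Pi.single i 1 - chi j ∈ S

/-- `T_Φ = { x ∈ ℤ²_{≥0} : x¹ + x² ≤ Φ }`. -/
def TPhi (Φ : ℤ) : Set (Fin 2 → ℤ) := {x | 0 ≤ x 0 ∧ 0 ≤ x 1 ∧ x 0 + x 1 ≤ Φ}

/-- M♮-concavity of a function on `T_Φ` (exchange property of its extension by `−∞`). -/
def MnConcaveOn (Φ : ℤ) (f : (Fin 2 → ℤ) → ℝ) : Prop :=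
  ∀ x ∈ TPhi Φ, ∀ y ∈ TPhi Φ, ∀ i : Fin 2, y i < x i →
    ∃ j : Option (Fin 2), (∀ j', j = some j' → x j' < y j') ∧
      x - Pi.single i 1 + chi j ∈ TPhi Φ ∧ y + Pi.single i 1 - chi j ∈ TPhi Φ ∧
      f x + f y ≤ f (x - Pi.single i 1 + chi j) + f (y + Pi.single i 1 - chi j)

noncomputable def lam1 (S : Set (Fin 2 → ℤ)) : ℤ := sInf ((fun x => x 0) '' S)
noncomputable def mu1 (S : Set (Fin 2 → ℤ)) : ℤ := sSup ((fun x => x 0) '' S)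
noncomputable def lam2 (S : Set (Fin 2 → ℤ)) : ℤ := sInf ((fun x => x 1) '' S)
noncomputable def mu2 (S : Set (Fin 2 → ℤ)) : ℤ := sSup ((fun x => x 1) '' S)
noncomputable def lam0 (S : Set (Fin 2 → ℤ)) : ℤ := sInf ((fun x => x 0 + x 1) '' S)
noncomputable def mu0 (S : Set (Fin 2 → ℤ)) : ℤ := sSup ((fun x => x 0 + x 1) '' S)

/-- Boundedness of a subset of `ℤ²`. -/
def BoundedSet (S : Set (Fin 2 → ℤ)) : Prop := ∃ M : ℤ, ∀ x ∈ S, |x 0| ≤ M ∧ |x 1| ≤ M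

/-- The quantity `ℓ_LH(S) − ℓ_UH(S) = (μ₁ − (λ₀ − λ₂)) − ((μ₀ − μ₂) − λ₁)`;
`S` is of positive-type if it is `> 0`, of zero-type if it equals `0`, and of
negative-type if it is `< 0`. -/
noncomputable def typeQ (S : Set (Fin 2 → ℤ)) : ℤ :=
  (mu1 S - (lam0 S - lam2 S)) - ((mu0 S - mu2 S) - lam1 S)

/-- `⟨p,x⟩ = p¹x¹ + p²x²`. -/
def inner2 (p : Fin 2 → ℝ) (x : Fin 2 → ℤ) : ℝ := p 0 * x 0 + p 1 * x 1

/-- The maximizer set `D_f(p)`. -/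
def maximizerSet (Φ : ℤ) (f : (Fin 2 → ℤ) → ℝ) (p : Fin 2 → ℝ) : Set (Fin 2 → ℤ) :=
  {x | x ∈ TPhi Φ ∧ ∀ y ∈ TPhi Φ, f y - inner2 p y ≤ f x - inner2 p x}

/-- A subset of `ℤ²` is two-dimensional if it is not contained in any affine line of `ℝ²`. -/
def TwoDimensional (S : Set (Fin 2 → ℤ)) : Prop :=
  ¬ ∃ a b c : ℝ, (a ≠ 0 ∨ b ≠ 0) ∧ ∀ x ∈ S, a * (x 0 : ℝ) + b * (x 1 : ℝ) = c

/-- Feasible assignments `y` for demand vector `x` and supplies `φ`. -/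
def FeasibleAssign {V : Type} [Fintype V] (φ : V → ℤ) (x : Fin 2 → ℤ)
    (y : V → Fin 2 → ℤ) : Prop :=
  (∀ i j, 0 ≤ y i j) ∧ (∀ j, ∑ i, y i j = x j) ∧ (∀ i, y i 0 + y i 1 ≤ φ i)

/-- `f` is the assignment valuation represented by `(V, w, φ)`. -/
def IsAssignmentValuation (Φ : ℤ) (f : (Fin 2 → ℤ) → ℝ) (V : Type) [Fintype V]
    (w : V → Fin 2 → ℝ) (φ : V → ℤ) : Prop :=
  (∀ i, 0 < φ i) ∧ (∑ i, φ i = Φ) ∧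
  ∀ x ∈ TPhi Φ, IsGreatest
    {s : ℝ | ∃ y : V → Fin 2 → ℤ, FeasibleAssign φ x y ∧
       s = ∑ i, (w i 0 * (y i 0 : ℝ) + w i 1 * (y i 1 : ℝ))} (f x)

/-- A hexagonalization of `T_Φ`: nonempty M♮-convex sets covering `T_Φ` whose convex hulls
have pairwise disjoint interiors. -/
def IsHexagonalization (Φ : ℤ) {q : ℕ} (H : Fin q → Set (Fin 2 → ℤ)) : Prop :=
  (∀ i, (H i).Nonempty) ∧ (∀ i, MnConvexSet (H i)) ∧ (⋃ i, H i) = TPhi Φ ∧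
  ∀ i j : Fin q, i ≠ j →
    interior (convexHull ℝ (toR '' H i)) ∩ interior (convexHull ℝ (toR '' H j)) = ∅

/-- A feasible hexagonalization: every member is of positive- or zero-type, and at least one
member is of positive-type. -/
def IsFeasibleHex (Φ : ℤ) {q : ℕ} (H : Fin q → Set (Fin 2 → ℤ)) : Prop :=
  IsHexagonalization Φ H ∧ (∀ i, 0 ≤ typeQ (H i)) ∧ ∃ i, 0 < typeQ (H i)

/-!
Let `z` satisfy the six inequalities and let `x ∈ S` be a point nearest to `z` in the
`ℓ¹`-distance. If `x ≠ z`, then, replacing `S` by `-S` if necessary, `z i < x i` for some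
coordinate `i`; let `k` be the other one. Exchanges of `x` with points of `S` attaining `λ_i`,
`μ_k` and `λ₀` produce a point of `S` that is strictly closer to `z`, so `z = x ∈ S`.
-/

open scoped Pointwise

section Bounds

variable {α β : Type*} [ConditionallyCompleteLinearOrder β] {S : Set α}

theorem Set.Finite.exists_le_of_csInf_image_le (hS : S.Finite) (hne : S.Nonempty) (f : α → β)
    {c : β} (h : sInf (f '' S) ≤ c) : ∃ u ∈ S, f u ≤ c := by
  obtain ⟨u, hu, hfu⟩ := (hne.image f).csInf_mem (hS.image f)
  exact ⟨u, hu, hfu ▸ h⟩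

theorem Set.Finite.exists_le_of_le_csSup_image (hS : S.Finite) (hne : S.Nonempty) (f : α → β)
    {c : β} (h : c ≤ sSup (f '' S)) : ∃ u ∈ S, c ≤ f u := by
  obtain ⟨u, hu, hfu⟩ := (hne.image f).csSup_mem (hS.image f)
  exact ⟨u, hu, hfu ▸ h⟩

end Bounds

theorem BoundedSet.finite {S : Set (Fin 2 → ℤ)} (hS : BoundedSet S) : S.Finite := by
  obtain ⟨M, hM⟩ := hS
  refine (Set.finite_Icc (fun _ => -M) fun _ => M).subset fun x hx => ?_
  have h0 := abs_le.mp (hM x hx).1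
  have h1 := abs_le.mp (hM x hx).2
  exact ⟨fun j => by fin_cases j <;> simp <;> omega, fun j => by fin_cases j <;> simp <;> omega⟩

def l1Dist (x y : Fin 2 → ℤ) : ℕ := (x 0 - y 0).natAbs + (x 1 - y 1).natAbs

theorem l1Dist_eq {i k : Fin 2} (hik : k ≠ i) (x y : Fin 2 → ℤ) :
    l1Dist x y = (x i - y i).natAbs + (x k - y k).natAbs := by
  fin_cases i <;> fin_cases k <;> simp_all [l1Dist, add_comm]

theorem l1Dist_neg_left (x y : Fin 2 → ℤ) : l1Dist (-x) y = l1Dist x (-y) := by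
  simp only [l1Dist, Pi.neg_apply]
  omega

theorem mem_of_forall_exists_l1Dist_lt {S : Set (Fin 2 → ℤ)} {z : Fin 2 → ℤ} (hne : S.Nonempty)
    (h : ∀ x ∈ S, x ≠ z → ∃ x' ∈ S, l1Dist x' z < l1Dist x z) : z ∈ S := by
  obtain ⟨x, hx, hmin⟩ := (measure (l1Dist · z)).wf.has_min S hne
  by_contra hz
  obtain ⟨x', hx', hlt⟩ := h x hx fun e => hz (e ▸ hx)
  exact hmin x' hx' hlt

namespace MnConvexSet

variable {S : Set (Fin 2 → ℤ)} {i k : Fin 2}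

theorem neg (hM : MnConvexSet S) : MnConvexSet (-S) := by
  intro x hx y hy i h
  obtain ⟨j, hj, h1, h2⟩ := hM (-y) hy (-x) hx i (by simpa using h)
  refine ⟨j, fun j' e => by simpa using hj j' e, ?_, ?_⟩
  · rw [Set.mem_neg, show -(x - Pi.single i 1 + chi j) = -x + Pi.single i 1 - chi j by abel]
    exact h2
  · rw [Set.mem_neg, show -(y + Pi.single i 1 - chi j) = -y - Pi.single i 1 + chi j by abel]
    exact h1

/-- In `ℤ²` the index `j` of the exchange axiom is either `χ₀` or the coordinate `k ≠ i`. -/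
theorem exchange (hM : MnConvexSet S) (hik : k ≠ i) {x y : Fin 2 → ℤ} (hx : x ∈ S) (hy : y ∈ S)
    (h : y i < x i) :
    ∃ x' ∈ S, ∃ y' ∈ S, x' i = x i - 1 ∧ y' i = y i + 1 ∧
      ((x' k = x k ∧ y' k = y k) ∨ (x k < y k ∧ x' k = x k + 1 ∧ y' k = y k - 1)) := by
  obtain ⟨j, hj, h1, h2⟩ := hM x hx y hy i h
  refine ⟨_, h1, _, h2, ?_⟩
  rcases j with _ | j
  · simp [chi, Pi.single_eq_of_ne hik]
  · obtain rfl : j = k := by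
      rcases eq_or_ne j i with rfl | hji
      · exact absurd (hj j rfl) h.le.not_gt
      · fin_cases i <;> fin_cases j <;> fin_cases k <;> simp_all
    simp [chi, Pi.single_eq_of_ne hik, Pi.single_eq_of_ne hik.symm, hj j rfl]

/-- Exchanging `x` against a point `y` of smaller coordinate sum either steps down from `x`
at once or moves `y` along the antidiagonal towards `x`. -/
theorem exists_lower_neighbor_of_sum_lt (hM : MnConvexSet S) (hik : k ≠ i) {x y : Fin 2 → ℤ}
    (hx : x ∈ S) (hy : y ∈ S) (hsum : y i + y k < x i + x k) :
    ∃ x' ∈ S, (x' i = x i - 1 ∧ x' k = x k) ∨ (x' i = x i ∧ x' k = x k - 1) := by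
  rcases lt_or_ge (y i) (x i) with hi | hi
  · obtain ⟨x', hx', y', hy', hx'i, hy'i, ⟨hx'k, -⟩ | ⟨-, -, hy'k⟩⟩ := hM.exchange hik hx hy hi
    · exact ⟨x', hx', Or.inl ⟨hx'i, hx'k⟩⟩
    · exact hM.exists_lower_neighbor_of_sum_lt hik hx hy' (by omega)
  · obtain ⟨x', hx', y', hy', hx'k, hy'k, ⟨hx'i, -⟩ | ⟨-, -, hy'i⟩⟩ :=
      hM.exchange hik.symm hx hy (by omega : y k < x k)
    · exact ⟨x', hx', Or.inr ⟨hx'i, hx'k⟩⟩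
    · exact hM.exists_lower_neighbor_of_sum_lt hik hx hy' (by omega)
termination_by (x i - y i).natAbs + (x k - y k).natAbs
decreasing_by all_goals omega

/-- Push `u` down in coordinate `k` until its exchange with `x' = x - χ_k` returns `x - χ_i`. -/
theorem exists_lower_neighbor_of_lower_neighbor (hM : MnConvexSet S) (hik : k ≠ i)
    {x x' u : Fin 2 → ℤ} (hx : x ∈ S) (hx' : x' ∈ S) (hx'i : x' i = x i) (hx'k : x' k = x k - 1) (hu : u ∈ S)
    (hui : u i < x i) : ∃ w ∈ S, w i = x i - 1 ∧ w k = x k := by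
  rcases le_or_gt (u k) (x k) with huk | huk
  · obtain ⟨w, hw, -, -, hwi, -, ⟨hwk, -⟩ | ⟨h, -⟩⟩ := hM.exchange hik hx hu hui
    · exact ⟨w, hw, hwi, hwk⟩
    · omega
  · obtain ⟨u', hu', w, hw, hu'k, hwk, ⟨hu'i, -⟩ | ⟨-, -, hwi⟩⟩ :=
      hM.exchange hik.symm hu hx' (by omega : x' k < u k)
    · exact hM.exists_lower_neighbor_of_lower_neighbor hik hx hx' hx'i hx'k hu' (by omega)
    · exact ⟨w, hw, by omega, by omega⟩
termination_by (u k - x k).toNat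
decreasing_by omega

theorem exists_l1Dist_lt_of_lt (hM : MnConvexSet S) (hik : k ≠ i) {x z : Fin 2 → ℤ}
    (hx : x ∈ S) (hzx : z i < x i) (hu : ∃ u ∈ S, u i ≤ z i) (hv : ∃ v ∈ S, z k ≤ v k)
    (hm : ∃ m ∈ S, m i + m k ≤ z i + z k) : ∃ x' ∈ S, l1Dist x' z < l1Dist x z := by
  simp only [l1Dist_eq hik]
  rcases lt_or_ge (x k) (z k) with hxk | hxk
  · obtain ⟨v, hv, hvk⟩ := hv
    obtain ⟨-, -, x', hx', -, hx'k, ⟨-, hx'i⟩ | ⟨-, -, hx'i⟩⟩ :=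
      hM.exchange hik.symm hv hx (by omega : x k < v k)
    all_goals exact ⟨x', hx', by omega⟩
  obtain ⟨m, hm, hmz⟩ := hm
  obtain ⟨x', hx', ⟨hx'i, hx'k⟩ | ⟨hx'i, hx'k⟩⟩ :=
    hM.exists_lower_neighbor_of_sum_lt hik hx hm (by omega)
  · exact ⟨x', hx', by omega⟩
  rcases hxk.lt_or_eq with hxk | hxk
  · exact ⟨x', hx', by omega⟩
  obtain ⟨u, hu, huz⟩ := hu
  obtain ⟨w, hw, hwi, hwk⟩ :=
    hM.exists_lower_neighbor_of_lower_neighbor hik hx hx' hx'i hx'k hu (by omega)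
  exact ⟨w, hw, by omega⟩

theorem exists_l1Dist_lt (hM : MnConvexSet S) {x z : Fin 2 → ℤ} (hx : x ∈ S) (hxz : x ≠ z)
    (hlow : ∀ i, ∃ u ∈ S, u i ≤ z i) (hup : ∀ i, ∃ v ∈ S, z i ≤ v i)
    (hsl : ∃ m ∈ S, m 0 + m 1 ≤ z 0 + z 1) (hsu : ∃ m ∈ S, z 0 + z 1 ≤ m 0 + m 1) :
    ∃ x' ∈ S, l1Dist x' z < l1Dist x z := by
  obtain ⟨i, hi⟩ := Function.ne_iff.mp hxz
  obtain ⟨k, hik⟩ : ∃ k, k ≠ i := ⟨i + 1, by fin_cases i <;> decide⟩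
  have hsum (y : Fin 2 → ℤ) : y i + y k = y 0 + y 1 := by
    fin_cases i <;> fin_cases k <;> simp_all [add_comm]
  rcases hi.lt_or_gt with hxzi | hzxi
  · obtain ⟨v, hv, hvi⟩ := hup i
    obtain ⟨u, hu, huk⟩ := hlow k
    obtain ⟨m, hm, hmz⟩ := hsu
    obtain ⟨x', hx', hlt⟩ := hM.neg.exists_l1Dist_lt_of_lt hik (x := -x) (z := -z)
      (by simpa using hx) (by simpa using hxzi) ⟨-v, by simpa using hv, by simpa using hvi⟩
      ⟨-u, by simpa using hu, by simpa using huk⟩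
      ⟨-m, by simpa using hm, by simp only [Pi.neg_apply]; linarith [hsum z, hsum m]⟩
    exact ⟨-x', hx', by simpa [l1Dist_neg_left] using hlt⟩
  · exact hM.exists_l1Dist_lt_of_lt hik hx hzxi (hlow i) (hup k)
      (by obtain ⟨m, hm, hmz⟩ := hsl; exact ⟨m, hm, by rwa [hsum z, hsum m]⟩)

end MnConvexSet

theorem stmt0 (S : Set (Fin 2 → ℤ)) (hne : S.Nonempty) (hbd : BoundedSet S)
    (hM : MnConvexSet S) :
    S = {x : Fin 2 → ℤ | lam1 S ≤ x 0 ∧ x 0 ≤ mu1 S ∧ lam2 S ≤ x 1 ∧ x 1 ≤ mu2 S ∧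
         lam0 S ≤ x 0 + x 1 ∧ x 0 + x 1 ≤ mu0 S} := by
  have hfin := hbd.finite
  ext z
  constructor
  · intro hz
    exact ⟨csInf_le (hfin.image _).bddBelow ⟨z, hz, rfl⟩,
      le_csSup (hfin.image _).bddAbove ⟨z, hz, rfl⟩,
      csInf_le (hfin.image _).bddBelow ⟨z, hz, rfl⟩,
      le_csSup (hfin.image _).bddAbove ⟨z, hz, rfl⟩,
      csInf_le (hfin.image _).bddBelow ⟨z, hz, rfl⟩,
      le_csSup (hfin.image _).bddAbove ⟨z, hz, rfl⟩⟩
  · rintro ⟨hl1, hu1, hl2, hu2, hl0, hu0⟩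
    refine mem_of_forall_exists_l1Dist_lt hne fun x hx hxz => hM.exists_l1Dist_lt hx hxz
      (Fin.forall_fin_two.2 ⟨?_, ?_⟩) (Fin.forall_fin_two.2 ⟨?_, ?_⟩)
      (hfin.exists_le_of_csInf_image_le hne _ hl0) (hfin.exists_le_of_le_csSup_image hne _ hu0)
    exacts [hfin.exists_le_of_csInf_image_le hne _ hl1, hfin.exists_le_of_csInf_image_le hne _ hl2,
      hfin.exists_le_of_le_csSup_image hne _ hu1, hfin.exists_le_of_le_csSup_image hne _ hu2]
end

section
/- A bivariate function f : T_Φ → ℝ is M♮-concave if and only if the following three inequalities hold for every pair of non-negative integers k, h with k + h ≤ Φ − 2: (i) f(k,h) + f(k+1,h+1) ≤ f(k+1,h) + f(k,h+1); (ii) f(k,h+1) + f(k+2,h) ≤ f(k+1,h+1) + f(k+1,h); (iii) f(k+1,h) + f(k,h+2) ≤ f(k+1,h+1) + f(k,h+1). -/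
open Finset

/-! Write `F k h = f ![k, h]`. Inequality (i) says that `∂₁F k h = F (k + 1) h - F k h` is
antitone in `h`, and (ii), (iii) say that `δF k h = F (k + 1) h - F k (h + 1)` is antitone in `k`
and monotone in `h`; (i) and (ii) together make `∂₁F` antitone in `k` as well. The symmetry
`k ↔ h` exchanges (ii) and (iii), so the same holds for `∂₂F`. Every exchange inequality demanded
by M♮-concavity compares `∂₁F`, `∂₂F` or `δF` at two suitably ordered points of `T_Φ`, so it
follows by walking along a monotone lattice path inside `T_Φ`. Conversely, (i)–(iii) are
themselves exchange inequalities for pairs of nearby points. -/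

theorem Int.apply_le_apply_of_antitone_step {β : Type*} [Preorder β] {g : ℤ → β} {m n : ℤ}
    (hmn : m ≤ n) (hg : ∀ k, m ≤ k → k < n → g (k + 1) ≤ g k) : g n ≤ g m :=
  antitoneOn_of_add_one_le Set.ordConnected_Icc
    (fun k _ hk hk1 => hg k hk.1 (by linarith [hk1.2])) ⟨le_rfl, hmn⟩ ⟨hmn, le_rfl⟩ hmn

theorem Int.apply_le_apply_of_monotone_step {β : Type*} [Preorder β] {g : ℤ → β} {m n : ℤ}
    (hmn : m ≤ n) (hg : ∀ k, m ≤ k → k < n → g k ≤ g (k + 1)) : g m ≤ g n :=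
  monotoneOn_of_le_add_one Set.ordConnected_Icc
    (fun k _ hk hk1 => hg k hk.1 (by linarith [hk1.2])) ⟨le_rfl, hmn⟩ ⟨hmn, le_rfl⟩ hmn

def LocallyMnConcave (Φ : ℤ) (F : ℤ → ℤ → ℝ) : Prop :=
  ∀ k h : ℤ, 0 ≤ k → 0 ≤ h → k + h ≤ Φ - 2 →
    (F k h + F (k + 1) (h + 1) ≤ F (k + 1) h + F k (h + 1)) ∧
    (F k (h + 1) + F (k + 2) h ≤ F (k + 1) (h + 1) + F (k + 1) h) ∧
    (F (k + 1) h + F k (h + 2) ≤ F (k + 1) (h + 1) + F k (h + 1))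

def fstDiff (F : ℤ → ℤ → ℝ) (k h : ℤ) : ℝ := F (k + 1) h - F k h

def crossDiff (F : ℤ → ℤ → ℝ) (k h : ℤ) : ℝ := F (k + 1) h - F k (h + 1)

namespace LocallyMnConcave

variable {Φ : ℤ} {F : ℤ → ℤ → ℝ}

theorem flip (hF : LocallyMnConcave Φ F) : LocallyMnConcave Φ (flip F) := by
  intro k h hk hh hkh
  obtain ⟨h₁, h₂, h₃⟩ := hF h k hh hk (by omega)
  exact ⟨by simp only [Function.flip_def]; linarith, h₃, h₂⟩

variable (hF : LocallyMnConcave Φ F) {k h : ℤ} (hk : 0 ≤ k) (hh : 0 ≤ h) (hkh : k + h + 2 ≤ Φ)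
include hF hk hh hkh

theorem fstDiff_succ_fst_le : fstDiff F (k + 1) h ≤ fstDiff F k h := by
  obtain ⟨h₁, h₂, -⟩ := hF k h hk hh (by omega)
  rw [fstDiff, fstDiff, show k + 1 + 1 = k + 2 by ring]
  linarith

theorem fstDiff_succ_snd_le : fstDiff F k (h + 1) ≤ fstDiff F k h := by
  obtain ⟨h₁, -, -⟩ := hF k h hk hh (by omega)
  rw [fstDiff, fstDiff]
  linarith

theorem crossDiff_succ_fst_le : crossDiff F (k + 1) h ≤ crossDiff F k h := by
  obtain ⟨-, h₂, -⟩ := hF k h hk hh (by omega)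
  rw [crossDiff, crossDiff, show k + 1 + 1 = k + 2 by ring]
  linarith

theorem crossDiff_le_succ_snd : crossDiff F k h ≤ crossDiff F k (h + 1) := by
  obtain ⟨-, -, h₃⟩ := hF k h hk hh (by omega)
  rw [crossDiff, crossDiff, show h + 1 + 1 = h + 2 by ring]
  linarith

omit hk hh hkh

variable {a b c d : ℤ}

theorem fstDiff_le_fstDiff (hc : 0 ≤ c) (hd : 0 ≤ d) (hca : c ≤ a) (hdb : d ≤ b)
    (hab : a + b + 1 ≤ Φ) : fstDiff F a b ≤ fstDiff F c d :=
  calc fstDiff F a b ≤ fstDiff F a d :=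
        Int.apply_le_apply_of_antitone_step hdb fun n hn hnb =>
          hF.fstDiff_succ_snd_le (by omega) (by omega) (by omega)
    _ ≤ fstDiff F c d :=
        Int.apply_le_apply_of_antitone_step (g := (fstDiff F · d)) hca fun n hn hna =>
          hF.fstDiff_succ_fst_le (by omega) hd (by omega)

theorem crossDiff_le_crossDiff (hc : 0 ≤ c) (hb : 0 ≤ b) (hca : c ≤ a) (hbd : b ≤ d)
    (hab : a + b + 1 ≤ Φ) (hcd : c + d + 1 ≤ Φ) : crossDiff F a b ≤ crossDiff F c d :=
  calc crossDiff F a b ≤ crossDiff F c b :=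
        Int.apply_le_apply_of_antitone_step (g := (crossDiff F · b)) hca fun n hn hna =>
          hF.crossDiff_succ_fst_le (by omega) hb (by omega)
    _ ≤ crossDiff F c d :=
        Int.apply_le_apply_of_monotone_step hbd fun n hn hnd =>
          hF.crossDiff_le_succ_snd hc (by omega) (by omega)

theorem exchange_of_le (hc : 0 ≤ c) (hd : 0 ≤ d) (hca : c < a) (hdb : d ≤ b)
    (hab : a + b ≤ Φ) : F a b + F c d ≤ F (a - 1) b + F (c + 1) d := by
  have := hF.fstDiff_le_fstDiff hc hd (a := a - 1) (by omega) hdb (by omega)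
  rw [fstDiff, fstDiff, sub_add_cancel] at this
  linarith

theorem exchange_of_lt (hc : 0 ≤ c) (hb : 0 ≤ b) (hca : c < a) (hbd : b < d)
    (hab : a + b ≤ Φ) (hcd : c + d ≤ Φ) :
    F a b + F c d ≤ F (a - 1) (b + 1) + F (c + 1) (d - 1) := by
  have := hF.crossDiff_le_crossDiff hc hb (a := a - 1) (d := d - 1) (by omega) (by omega) (by omega)
    (by omega)
  rw [crossDiff, crossDiff, sub_add_cancel, sub_add_cancel] at this
  linarith

end LocallyMnConcave

section Exchange

variable {Φ : ℤ} {F : ℤ → ℤ → ℝ}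

theorem LocallyMnConcave.mnConcaveOn (hF : LocallyMnConcave Φ F) :
    MnConcaveOn Φ (fun x => F (x 0) (x 1)) := by
  rintro x ⟨hx₀, hx₁, hx⟩ y ⟨hy₀, hy₁, hy⟩
  refine Fin.forall_fin_two.2 ⟨fun hyx => ?_, fun hyx => ?_⟩
  · rcases le_or_gt (y 1) (x 1) with hle | hlt
    · refine ⟨none, nofun, by simp [TPhi, chi]; omega, by simp [TPhi, chi]; omega, ?_⟩
      simpa [chi] using hF.exchange_of_le hy₀ hy₁ hyx hle hx
    · refine ⟨some 1, by simpa using hlt, by simp [TPhi, chi]; omega,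
        by simp [TPhi, chi]; omega, ?_⟩
      simpa [chi] using hF.exchange_of_lt hy₀ hx₁ hyx hlt hx hy
  · rcases le_or_gt (y 0) (x 0) with hle | hlt
    · refine ⟨none, nofun, by simp [TPhi, chi]; omega, by simp [TPhi, chi]; omega, ?_⟩
      simpa [chi, Function.flip_def] using hF.flip.exchange_of_le hy₁ hy₀ hyx hle (by omega)
    · refine ⟨some 0, by simpa using hlt, by simp [TPhi, chi]; omega,
        by simp [TPhi, chi]; omega, ?_⟩
      simpa [chi, Function.flip_def] using
        hF.flip.exchange_of_lt hy₁ hx₀ hyx hlt (by omega) (by omega)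

theorem MnConcaveOn.locallyMnConcave (hG : MnConcaveOn Φ (fun x => F (x 0) (x 1))) :
    LocallyMnConcave Φ F := by
  intro k h hk hh hkh
  refine ⟨?_, ?_, ?_⟩
  · obtain ⟨j, hj, -, -, hle⟩ := hG ![k + 1, h + 1] (by simp [TPhi]; omega)
      ![k, h] (by simp [TPhi]; omega) 0 (by simp)
    rcases j with _ | j
    · simp [chi, Matrix.vecHead, Matrix.vecTail] at hle; linarith
    · fin_cases j <;> simp at hj
  · obtain ⟨j, hj, -, -, hle⟩ := hG ![k + 2, h] (by simp [TPhi]; omega)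
      ![k, h + 1] (by simp [TPhi]; omega) 0 (by simp)
    rcases j with _ | j
    · simp [chi, Matrix.vecHead, Matrix.vecTail] at hle; ring_nf at hle ⊢; linarith
    · fin_cases j
      · simp at hj
      · simp [chi, Matrix.vecHead, Matrix.vecTail] at hle; ring_nf at hle ⊢; linarith
  · obtain ⟨j, hj, -, -, hle⟩ := hG ![k, h + 2] (by simp [TPhi]; omega)
      ![k + 1, h] (by simp [TPhi]; omega) 1 (by simp)
    rcases j with _ | j
    · simp [chi, Matrix.vecHead, Matrix.vecTail] at hle; ring_nf at hle ⊢; linarith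
    · fin_cases j
      · simp [chi, Matrix.vecHead, Matrix.vecTail] at hle; ring_nf at hle ⊢; linarith
      · simp at hj

end Exchange

theorem stmt4_general (Φ : ℤ) (f : (Fin 2 → ℤ) → ℝ) :
    MnConcaveOn Φ f ↔
      ∀ k h : ℤ, 0 ≤ k → 0 ≤ h → k + h ≤ Φ - 2 →
        (f ![k, h] + f ![k + 1, h + 1] ≤ f ![k + 1, h] + f ![k, h + 1]) ∧
        (f ![k, h + 1] + f ![k + 2, h] ≤ f ![k + 1, h + 1] + f ![k + 1, h]) ∧
        (f ![k + 1, h] + f ![k, h + 2] ≤ f ![k + 1, h + 1] + f ![k, h + 1]) := by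
  have hf : (fun x : Fin 2 → ℤ => f ![x 0, x 1]) = f :=
    funext fun x => congrArg f (by ext i; fin_cases i <;> rfl)
  conv_lhs => rw [← hf]
  exact ⟨MnConcaveOn.locallyMnConcave (F := fun k h => f ![k, h]), LocallyMnConcave.mnConcaveOn⟩

theorem stmt4 (Φ : ℤ) (hΦ : 0 < Φ) (f : (Fin 2 → ℤ) → ℝ) :
    MnConcaveOn Φ f ↔
      ∀ k h : ℤ, 0 ≤ k → 0 ≤ h → k + h ≤ Φ - 2 →
        (f ![k, h] + f ![k + 1, h + 1] ≤ f ![k + 1, h] + f ![k, h + 1]) ∧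
        (f ![k, h + 1] + f ![k + 2, h] ≤ f ![k + 1, h + 1] + f ![k + 1, h]) ∧
        (f ![k + 1, h] + f ![k, h + 2] ≤ f ![k + 1, h + 1] + f ![k, h + 1]) :=
  stmt4_general Φ f
end

section
/- Every bivariate assignment valuation is M♮-concave. That is, if V is a finite set, w : V × {1,2} → ℝ, φ : V → ℤ_{>0}, Φ = Σ_{i∈V} φ(i), and f : T_Φ → ℝ is the assignment valuation represented by (V, w, φ), then f is M♮-concave. -/
open Finset

/-! Take optimal assignments `a` of `x` and `b` of `y`. It suffices to find a transfer `δ` of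
total `χ_i − χ_j` such that `a − δ` and `b + δ` are again feasible: the value of an assignment is
linear, so `f x + f y = val (a − δ) + val (b + δ) ≤ f (x − χ_i + χ_j) + f (y + χ_i − χ_j)`.
Since `x^i > y^i` there is a vertex `v` with `b_v^i < a_v^i`. If `b_v` has spare capacity, move one
unit of `i` at `v` (`j = 0`). Otherwise `b_v` is saturated, so `a_v^k < b_v^k` for the other index
`k`, and swapping `i` against `k` at `v` works with `j = k` when `x^k < y^k`. If `x^k ≥ y^k`, then
`x` has the larger total, so some vertex `t` has `b_t^i + b_t^k < a_t^i + a_t^k`; `b_t` has spare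
capacity there, and moving one unit of `i` or of `k` at `t` (the latter combined with the swap at
`v`) gives `j = 0`. -/

def CellFeasible (c : ℤ) (z : Fin 2 → ℤ) : Prop := (∀ j, 0 ≤ z j) ∧ z 0 + z 1 ≤ c

lemma apply_zero_add_apply_one_eq_of_ne {i k : Fin 2} (hik : i ≠ k) (z : Fin 2 → ℤ) :
    z 0 + z 1 = z i + z k := by
  fin_cases i <;> fin_cases k <;> simp_all [add_comm]

lemma cellFeasible_iff_of_ne {c : ℤ} {z : Fin 2 → ℤ} {i k : Fin 2} (hik : i ≠ k) :
    CellFeasible c z ↔ 0 ≤ z i ∧ 0 ≤ z k ∧ z i + z k ≤ c := by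
  unfold CellFeasible
  fin_cases i <;> fin_cases k <;> simp_all [Fin.forall_fin_two] <;> omega

lemma CellFeasible.sub_single {c : ℤ} {p : Fin 2 → ℤ} (hp : CellFeasible c p) {i : Fin 2}
    (hi : 0 < p i) : CellFeasible c (p - Pi.single i 1) := by
  obtain ⟨k, hki⟩ := exists_ne i
  rw [cellFeasible_iff_of_ne hki.symm] at hp ⊢
  simp [hki]
  omega

lemma CellFeasible.add_single {c : ℤ} {p : Fin 2 → ℤ} (hp : CellFeasible c p)
    (hslack : p 0 + p 1 < c) (i : Fin 2) : CellFeasible c (p + Pi.single i 1) := by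
  obtain ⟨k, hki⟩ := exists_ne i
  rw [apply_zero_add_apply_one_eq_of_ne hki.symm] at hslack
  rw [cellFeasible_iff_of_ne hki.symm] at hp ⊢
  simp [hki]
  omega

lemma CellFeasible.add_single_sub_single {c : ℤ} {p : Fin 2 → ℤ} (hp : CellFeasible c p)
    {i k : Fin 2} (hik : i ≠ k) (hk : 0 < p k) :
    CellFeasible c (p + (Pi.single i 1 - Pi.single k 1)) := by
  rw [cellFeasible_iff_of_ne hik] at hp ⊢
  simp [hik, hik.symm]
  omega

section Transfer

variable {V : Type}

def ValidTransfer (φ : V → ℤ) (a b δ : V → Fin 2 → ℤ) : Prop :=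
  ∀ t, CellFeasible (φ t) (a t - δ t) ∧ CellFeasible (φ t) (b t + δ t)

lemma ValidTransfer.add_single [DecidableEq V] {φ : V → ℤ} {a b δ : V → Fin 2 → ℤ}
    (hδ : ValidTransfer φ a b δ) {v : V} (hδv : δ v = 0) {c : Fin 2 → ℤ}
    (hav : CellFeasible (φ v) (a v - c)) (hbv : CellFeasible (φ v) (b v + c)) :
    ValidTransfer φ a b (δ + Pi.single v c) := by
  intro t
  rcases eq_or_ne t v with rfl | htv
  · simpa [hδv] using ⟨hav, hbv⟩
  · simpa [htv] using hδ t

variable [Fintype V] {φ : V → ℤ} {x y : Fin 2 → ℤ} {a b : V → Fin 2 → ℤ}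

lemma FeasibleAssign.cellFeasible (ha : FeasibleAssign φ x a) (t : V) :
    CellFeasible (φ t) (a t) :=
  ⟨ha.1 t, ha.2.2 t⟩

lemma FeasibleAssign.sum_eq (ha : FeasibleAssign φ x a) : ∑ t, a t = x :=
  funext fun j => by rw [Finset.sum_apply, ha.2.1 j]

lemma feasibleAssign_of_cellFeasible (ha : ∀ t, CellFeasible (φ t) (a t)) (hx : ∑ t, a t = x) :
    FeasibleAssign φ x a :=
  ⟨fun t => (ha t).1, fun j => by rw [← hx, Finset.sum_apply], fun t => (ha t).2⟩

lemma FeasibleAssign.mem_TPhi (ha : FeasibleAssign φ x a) : x ∈ TPhi (∑ t, φ t) := by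
  obtain ⟨hnonneg, hsum, hcap⟩ := ha
  refine ⟨?_, ?_, ?_⟩
  · rw [← hsum 0]; exact sum_nonneg fun t _ => hnonneg t 0
  · rw [← hsum 1]; exact sum_nonneg fun t _ => hnonneg t 1
  · rw [← hsum 0, ← hsum 1, ← sum_add_distrib]
    exact sum_le_sum fun t _ => hcap t

lemma validTransfer_zero (ha : FeasibleAssign φ x a) (hb : FeasibleAssign φ y b) :
    ValidTransfer φ a b 0 :=
  fun t => by simpa using ⟨ha.cellFeasible t, hb.cellFeasible t⟩

lemma validTransfer_single [DecidableEq V] (ha : FeasibleAssign φ x a)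
    (hb : FeasibleAssign φ y b) {v : V} {c : Fin 2 → ℤ} (hav : CellFeasible (φ v) (a v - c))
    (hbv : CellFeasible (φ v) (b v + c)) : ValidTransfer φ a b (Pi.single v c) := by
  simpa using (validTransfer_zero ha hb).add_single rfl hav hbv

lemma ValidTransfer.feasibleAssign {δ : V → Fin 2 → ℤ} (hδ : ValidTransfer φ a b δ)
    (ha : FeasibleAssign φ x a) (hb : FeasibleAssign φ y b) :
    FeasibleAssign φ (x - ∑ t, δ t) (a - δ) ∧ FeasibleAssign φ (y + ∑ t, δ t) (b + δ) :=
  ⟨feasibleAssign_of_cellFeasible (fun t => (hδ t).1) (by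
      simp only [Pi.sub_apply, sum_sub_distrib, ha.sum_eq]),
    feasibleAssign_of_cellFeasible (fun t => (hδ t).2) (by
      simp only [Pi.add_apply, sum_add_distrib, hb.sum_eq])⟩

theorem exists_validTransfer (ha : FeasibleAssign φ x a) (hb : FeasibleAssign φ y b)
    {i : Fin 2} (hlt : y i < x i) :
    ∃ j : Option (Fin 2), (∀ j', j = some j' → x j' < y j') ∧
      ∃ δ : V → Fin 2 → ℤ, ∑ t, δ t = Pi.single i 1 - chi j ∧ ValidTransfer φ a b δ := by
  classical
  obtain ⟨k, hki⟩ := exists_ne i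
  have hik := hki.symm
  have move_one : ∀ u, b u i < a u i → b u 0 + b u 1 < φ u → ∃ j : Option (Fin 2),
      (∀ j', j = some j' → x j' < y j') ∧
      ∃ δ : V → Fin 2 → ℤ, ∑ t, δ t = Pi.single i 1 - chi j ∧ ValidTransfer φ a b δ :=
    fun u hu hslack => ⟨none, by simp, Pi.single u (Pi.single i 1), by simp [chi],
      validTransfer_single ha hb ((ha.cellFeasible u).sub_single (by linarith [hb.1 u i]))
        ((hb.cellFeasible u).add_single hslack i)⟩
  obtain ⟨v, -, hv⟩ := exists_lt_of_sum_lt (s := univ) (f := fun t => b t i)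
    (g := fun t => a t i) (by rwa [hb.2.1, ha.2.1])
  by_cases hslack : b v 0 + b v 1 < φ v
  · exact move_one v hv hslack
  have hvk : a v k < b v k := by
    have := ha.2.2 v
    rw [apply_zero_add_apply_one_eq_of_ne hik] at hslack this
    omega
  have hswap : ValidTransfer φ a b (Pi.single v (Pi.single i 1 - Pi.single k 1)) := by
    refine validTransfer_single ha hb ?_
      ((hb.cellFeasible v).add_single_sub_single hik (by linarith [ha.1 v k]))
    rw [sub_sub_eq_add_sub, add_sub_assoc]
    exact (ha.cellFeasible v).add_single_sub_single hki (by linarith [hb.1 v i])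
  by_cases hxk : x k < y k
  · exact ⟨some k, by rintro _ ⟨⟩; exact hxk, _, by simp [chi], hswap⟩
  obtain ⟨t, -, ht⟩ := exists_lt_of_sum_lt (s := univ) (f := fun t => b t i + b t k)
    (g := fun t => a t i + a t k) (by simp only [sum_add_distrib, ha.2.1, hb.2.1]; omega)
  have htslack : b t 0 + b t 1 < φ t := by
    have := ha.2.2 t
    rw [apply_zero_add_apply_one_eq_of_ne hik] at this ⊢
    omega
  rcases lt_or_ge (b t i) (a t i) with hti | hti
  · exact move_one t hti htslack
  have hvt : v ≠ t := by rintro rfl; omega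
  refine ⟨none, by simp, _, ?_, hswap.add_single (by simp [hvt.symm])
    ((ha.cellFeasible t).sub_single (by linarith [hb.1 t k]))
    ((hb.cellFeasible t).add_single htslack k)⟩
  simp [chi, sum_add_distrib]

end Transfer

section AssignmentValuation

variable {V : Type} [Fintype V] {Φ : ℤ} {f : (Fin 2 → ℤ) → ℝ} {w : V → Fin 2 → ℝ} {φ : V → ℤ}
  {x y : Fin 2 → ℤ} {a b : V → Fin 2 → ℤ}

def assignValue (w : V → Fin 2 → ℝ) (a : V → Fin 2 → ℤ) : ℝ :=
  ∑ t, (w t 0 * (a t 0 : ℝ) + w t 1 * (a t 1 : ℝ))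

lemma assignValue_sub_add_add (w : V → Fin 2 → ℝ) (a b δ : V → Fin 2 → ℤ) :
    assignValue w (a - δ) + assignValue w (b + δ) = assignValue w a + assignValue w b := by
  simp only [assignValue, ← sum_add_distrib, Pi.sub_apply, Pi.add_apply]
  refine sum_congr rfl fun t _ => ?_
  push_cast
  ring

lemma IsAssignmentValuation.exists_optimal (h : IsAssignmentValuation Φ f V w φ)
    (hx : x ∈ TPhi Φ) : ∃ a, FeasibleAssign φ x a ∧ f x = assignValue w a :=
  (h.2.2 x hx).1

lemma IsAssignmentValuation.assignValue_le (h : IsAssignmentValuation Φ f V w φ)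
    (ha : FeasibleAssign φ x a) : assignValue w a ≤ f x :=
  (h.2.2 x (h.2.1 ▸ ha.mem_TPhi)).2 ⟨a, ha, rfl⟩

lemma IsAssignmentValuation.add_le_of_validTransfer (h : IsAssignmentValuation Φ f V w φ)
    {δ : V → Fin 2 → ℤ} (ha : FeasibleAssign φ x a) (hb : FeasibleAssign φ y b)
    (hfa : f x = assignValue w a) (hfb : f y = assignValue w b) (hδ : ValidTransfer φ a b δ) :
    f x + f y ≤ f (x - ∑ t, δ t) + f (y + ∑ t, δ t) := by
  obtain ⟨ha', hb'⟩ := hδ.feasibleAssign ha hb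
  calc f x + f y = assignValue w (a - δ) + assignValue w (b + δ) := by
        rw [hfa, hfb, assignValue_sub_add_add]
    _ ≤ f (x - ∑ t, δ t) + f (y + ∑ t, δ t) :=
        add_le_add (h.assignValue_le ha') (h.assignValue_le hb')

end AssignmentValuation

theorem stmt7_general (Φ : ℤ) (f : (Fin 2 → ℤ) → ℝ) (V : Type) [Fintype V]
    (w : V → Fin 2 → ℝ) (φ : V → ℤ) (h : IsAssignmentValuation Φ f V w φ) :
    MnConcaveOn Φ f := by
  intro x hx y hy i hlt
  obtain ⟨a, ha, hfa⟩ := h.exists_optimal hx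
  obtain ⟨b, hb, hfb⟩ := h.exists_optimal hy
  obtain ⟨j, hj, δ, hδ, hvalid⟩ := exists_validTransfer ha hb hlt
  obtain ⟨ha', hb'⟩ := hvalid.feasibleAssign ha hb
  have hx' : x - Pi.single i 1 + chi j = x - ∑ t, δ t := by rw [hδ]; abel
  have hy' : y + Pi.single i 1 - chi j = y + ∑ t, δ t := by rw [hδ]; abel
  refine ⟨j, hj, ?_⟩
  rw [hx', hy']
  exact ⟨h.2.1 ▸ ha'.mem_TPhi, h.2.1 ▸ hb'.mem_TPhi, h.add_le_of_validTransfer ha hb hfa hfb hvalid⟩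

theorem stmt7 (Φ : ℤ) (hΦ : 0 < Φ) (f : (Fin 2 → ℤ) → ℝ) (V : Type) [Fintype V]
    (w : V → Fin 2 → ℝ) (φ : V → ℤ) (h : IsAssignmentValuation Φ f V w φ) :
    MnConcaveOn Φ f :=
  stmt7_general Φ f V w φ h
end

section
/- Every bivariate assignment valuation has a unique irreducible representation: if (V, w, φ) and (V', w', φ') are both irreducible representations of the same function f : T_Φ → ℝ, then there exists a bijection σ : V → V' such that w'(σ(i), j) = w(i, j) for all i ∈ V and j ∈ {1,2}, and φ'(σ(i)) = φ(i) for all i ∈ V. -/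
open Finset

/-!
The concave conjugate `g p = max_x (f x - ⟨p, x⟩)` of an assignment valuation is
`∑ i, φ i * max (w i 0 - p 0) (max (w i 1 - p 1) 0)`: at prices `p` each unit of supply of `i`
is sold to the more profitable of the two goods, or not at all. So `g` depends only on `f`. Each
summand is a tropical corner at `w i`, and the hexagonal second difference of `g` of small radius
`ε` around `c` is `-ε` times the total supply of the vertices of weight `c`. Thus `f` determines
the supply at every weight, which for irreducible representations is a weight-preserving
bijection of the vertex sets.
-/

open Filter Topology Function

def maxWithZero (u v : ℝ) : ℝ := max u (max v 0)

lemma mul_add_mul_le_mul_maxWithZero {u v a b c : ℝ} (ha : 0 ≤ a) (hb : 0 ≤ b)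
    (habc : a + b ≤ c) : u * a + v * b ≤ c * maxWithZero u v := by
  have hu : u ≤ maxWithZero u v := le_max_left _ _
  have hv : v ≤ maxWithZero u v := (le_max_left _ _).trans (le_max_right _ _)
  have h0 : 0 ≤ maxWithZero u v := (le_max_right _ _).trans (le_max_right _ _)
  nlinarith [mul_le_mul_of_nonneg_right hu ha, mul_le_mul_of_nonneg_right hv hb,
    mul_le_mul_of_nonneg_left habc h0]

lemma exists_choice_mul_eq_maxWithZero (u v : ℝ) :
    ∃ e : Fin 2 → ℤ, (∀ j, 0 ≤ e j) ∧ e 0 + e 1 ≤ 1 ∧ u * e 0 + v * e 1 = maxWithZero u v := by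
  rcases le_total (max v 0) u with hu | hu
  · refine ⟨![1, 0], ?_, by simp, ?_⟩
    · intro j; fin_cases j <;> simp
    · simp [maxWithZero, max_eq_left hu]
  rcases le_total 0 v with hv | hv
  · refine ⟨![0, 1], ?_, by simp, ?_⟩
    · intro j; fin_cases j <;> simp
    · rw [maxWithZero, max_eq_right hu, max_eq_left hv]; simp
  · refine ⟨0, fun _ => le_rfl, by simp, ?_⟩
    rw [maxWithZero, max_eq_right hu, max_eq_right hv]; simp

section Conjugate

variable {V : Type} [Fintype V]

noncomputable def assignmentConjugate (w : V → Fin 2 → ℝ) (φ : V → ℤ) (p : Fin 2 → ℝ) : ℝ :=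
  ∑ i, (φ i : ℝ) * maxWithZero (w i 0 - p 0) (w i 1 - p 1)

lemma sum_weight_sub_inner2_eq {x : Fin 2 → ℤ} {y : V → Fin 2 → ℤ}
    (hx : ∀ j, ∑ i, y i j = x j) (w : V → Fin 2 → ℝ) (p : Fin 2 → ℝ) :
    ∑ i, (w i 0 * (y i 0 : ℝ) + w i 1 * (y i 1 : ℝ)) - inner2 p x =
      ∑ i, ((w i 0 - p 0) * (y i 0 : ℝ) + (w i 1 - p 1) * (y i 1 : ℝ)) := by
  simp only [inner2, ← hx, Int.cast_sum, Finset.mul_sum, ← Finset.sum_add_distrib,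
    ← Finset.sum_sub_distrib]
  exact Finset.sum_congr rfl fun i _ => by ring

lemma FeasibleAssign.mem_TPhi_s9 {φ : V → ℤ} {x : Fin 2 → ℤ} {y : V → Fin 2 → ℤ}
    (hy : FeasibleAssign φ x y) : x ∈ TPhi (∑ i, φ i) := by
  obtain ⟨hnonneg, hx, hcap⟩ := hy
  refine ⟨?_, ?_, ?_⟩
  · rw [← hx 0]; exact Finset.sum_nonneg fun i _ => hnonneg i 0
  · rw [← hx 1]; exact Finset.sum_nonneg fun i _ => hnonneg i 1
  · rw [← hx 0, ← hx 1, ← Finset.sum_add_distrib]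
    exact Finset.sum_le_sum fun i _ => hcap i

lemma FeasibleAssign.sum_weight_sub_inner2_le {φ : V → ℤ} {x : Fin 2 → ℤ}
    {y : V → Fin 2 → ℤ} (hy : FeasibleAssign φ x y) (w : V → Fin 2 → ℝ) (p : Fin 2 → ℝ) :
    ∑ i, (w i 0 * (y i 0 : ℝ) + w i 1 * (y i 1 : ℝ)) - inner2 p x ≤
      assignmentConjugate w φ p := by
  obtain ⟨hnonneg, hx, hcap⟩ := hy
  rw [sum_weight_sub_inner2_eq hx]
  refine Finset.sum_le_sum fun i _ => mul_add_mul_le_mul_maxWithZero ?_ ?_ ?_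
  · exact_mod_cast hnonneg i 0
  · exact_mod_cast hnonneg i 1
  · exact_mod_cast hcap i

lemma exists_feasibleAssign_sum_weight_sub_inner2_eq {φ : V → ℤ} (hφ : ∀ i, 0 ≤ φ i)
    (w : V → Fin 2 → ℝ) (p : Fin 2 → ℝ) :
    ∃ x y, FeasibleAssign φ x y ∧
      ∑ i, (w i 0 * (y i 0 : ℝ) + w i 1 * (y i 1 : ℝ)) - inner2 p x =
        assignmentConjugate w φ p := by
  choose e he he₁ hmax using fun i => exists_choice_mul_eq_maxWithZero (w i 0 - p 0) (w i 1 - p 1)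
  refine ⟨fun j => ∑ i, φ i * e i j, fun i j => φ i * e i j,
    ⟨fun i j => mul_nonneg (hφ i) (he i j), fun j => rfl, fun i => ?_⟩, ?_⟩
  · show φ i * e i 0 + φ i * e i 1 ≤ φ i
    rw [← mul_add]
    exact mul_le_of_le_one_right (hφ i) (he₁ i)
  · refine (sum_weight_sub_inner2_eq (y := fun i j => φ i * e i j) (fun j => rfl) w p).trans
      (Finset.sum_congr rfl fun i _ => ?_)
    rw [← hmax i]
    push_cast
    ring

lemma IsAssignmentValuation.isGreatest_assignmentConjugate {Φ : ℤ} {f : (Fin 2 → ℤ) → ℝ}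
    {w : V → Fin 2 → ℝ} {φ : V → ℤ} (h : IsAssignmentValuation Φ f V w φ) (p : Fin 2 → ℝ) :
    IsGreatest {s | ∃ x ∈ TPhi Φ, s = f x - inner2 p x} (assignmentConjugate w φ p) := by
  obtain ⟨hφ, rfl, hf⟩ := h
  have hle : ∀ x ∈ TPhi (∑ i, φ i), f x - inner2 p x ≤ assignmentConjugate w φ p := by
    intro x hx
    obtain ⟨y, hy, hfx⟩ := (hf x hx).1
    exact hfx ▸ hy.sum_weight_sub_inner2_le w p
  refine ⟨?_, fun s ⟨x, hx, hs⟩ => hs ▸ hle x hx⟩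
  obtain ⟨x, y, hy, hval⟩ := exists_feasibleAssign_sum_weight_sub_inner2_eq (fun i => (hφ i).le) w p
  have hfx := (hf x hy.mem_TPhi_s9).2 ⟨y, hy, rfl⟩
  exact ⟨x, hy.mem_TPhi_s9, le_antisymm (by linarith) (hle x hy.mem_TPhi_s9)⟩

lemma IsAssignmentValuation.assignmentConjugate_eq {Φ : ℤ} {f : (Fin 2 → ℤ) → ℝ}
    {V' : Type} [Fintype V'] {w : V → Fin 2 → ℝ} {φ : V → ℤ} {w' : V' → Fin 2 → ℝ}
    {φ' : V' → ℤ} (h : IsAssignmentValuation Φ f V w φ) (h' : IsAssignmentValuation Φ f V' w' φ') :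
    assignmentConjugate w φ = assignmentConjugate w' φ' :=
  funext fun p => (h.isGreatest_assignmentConjugate p).unique (h'.isGreatest_assignmentConjugate p)

end Conjugate

/-- Chosen so that the hexagon of radius `ε` around `(u, v)` crosses a kink line of
`maxWithZero` only when it is centred on one. -/
def IsSeparated (ε u v : ℝ) : Prop :=
  (u = 0 ∨ ε < |u|) ∧ (v = 0 ∨ ε < |v|) ∧ (u = v ∨ ε < |u - v|)

lemma eventually_isSeparated (u v : ℝ) : ∀ᶠ ε in 𝓝[>] (0 : ℝ), IsSeparated ε u v := by
  have key : ∀ d : ℝ, ∀ᶠ ε in 𝓝[>] (0 : ℝ), d = 0 ∨ ε < |d| := by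
    intro d
    rcases eq_or_ne d 0 with hd | hd
    · exact Eventually.of_forall fun _ => Or.inl hd
    · exact ((eventually_lt_nhds (abs_pos.mpr hd)).filter_mono nhdsWithin_le_nhds).mono
        fun _ => Or.inr
  exact (key u).and ((key v).and ((key (u - v)).mono fun _ => Or.imp_left sub_eq_zero.mp))

lemma eq_zero_or_lt_or_lt_neg {ε d : ℝ} (h : d = 0 ∨ ε < |d|) : d = 0 ∨ ε < d ∨ d < -ε := by
  rcases h with h | h
  · exact Or.inl h
  · rcases lt_abs.mp h with h | h
    · exact Or.inr (Or.inl h)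
    · exact Or.inr (Or.inr (by linarith))

lemma maxWithZero_cornerDiff {ε u v : ℝ} (hε : 0 < ε) (h : IsSeparated ε u v) :
    (maxWithZero (u + ε) (v + ε) - maxWithZero (u + ε) v - maxWithZero u (v + ε)) -
      (maxWithZero (u - ε) (v - ε) - maxWithZero (u - ε) v - maxWithZero u (v - ε)) =
      if u = 0 ∧ v = 0 then -ε else 0 := by
  obtain ⟨hu, hv, huv⟩ := h
  replace hu := eq_zero_or_lt_or_lt_neg hu
  replace hv := eq_zero_or_lt_or_lt_neg hv
  replace huv := eq_zero_or_lt_or_lt_neg (huv.imp_left sub_eq_zero.mpr)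
  obtain hu | hu | hu := hu <;> obtain hv | hv | hv := hv <;> obtain huv | huv | huv := huv <;>
    grind [maxWithZero]

def cornerDiff (g : (Fin 2 → ℝ) → ℝ) (c : Fin 2 → ℝ) (ε : ℝ) : ℝ :=
  (g ![c 0 - ε, c 1 - ε] - g ![c 0 - ε, c 1] - g ![c 0, c 1 - ε]) -
    (g ![c 0 + ε, c 1 + ε] - g ![c 0 + ε, c 1] - g ![c 0, c 1 + ε])

lemma cornerDiff_assignmentConjugate {V : Type} [Fintype V] {w : V → Fin 2 → ℝ} (φ : V → ℤ)
    {c : Fin 2 → ℝ} {ε : ℝ} (hε : 0 < ε)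
    (hsep : ∀ i, IsSeparated ε (w i 0 - c 0) (w i 1 - c 1)) :
    cornerDiff (assignmentConjugate w φ) c ε =
      -ε * ∑ i ∈ Finset.univ.filter (w · = c), (φ i : ℝ) := by
  have hfiber : ∀ i, w i = c ↔ w i 0 - c 0 = 0 ∧ w i 1 - c 1 = 0 := fun i => by
    simp [funext_iff, Fin.forall_fin_two, sub_eq_zero]
  rw [Finset.mul_sum, Finset.sum_filter]
  simp only [cornerDiff, assignmentConjugate, Matrix.cons_val_zero, Matrix.cons_val_one,
    ← Finset.sum_sub_distrib]
  refine Finset.sum_congr rfl fun i _ => ?_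
  have hcorner := maxWithZero_cornerDiff hε (hsep i)
  simp only [sub_add_eq_sub_sub, sub_sub_eq_add_sub, add_sub_right_comm] at hcorner ⊢
  rw [if_congr (hfiber i) rfl rfl]
  split_ifs at hcorner ⊢ <;> linear_combination (φ i : ℝ) * hcorner

lemma sum_fiber_eq_of_assignmentConjugate_eq {V V' : Type} [Fintype V] [Fintype V']
    {w : V → Fin 2 → ℝ} {φ : V → ℤ} {w' : V' → Fin 2 → ℝ} {φ' : V' → ℤ}
    (hg : assignmentConjugate w φ = assignmentConjugate w' φ') (c : Fin 2 → ℝ) :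
    ∑ i ∈ Finset.univ.filter (w · = c), φ i = ∑ j ∈ Finset.univ.filter (w' · = c), φ' j := by
  have hsep : ∀ {W : Type} [Fintype W] (ω : W → Fin 2 → ℝ),
      ∀ᶠ ε in 𝓝[>] (0 : ℝ), ∀ i, IsSeparated ε (ω i 0 - c 0) (ω i 1 - c 1) :=
    fun _ => eventually_all.mpr fun _ => eventually_isSeparated _ _
  obtain ⟨ε, hε, hsepV, hsepV'⟩ := (eventually_mem_nhdsWithin.and ((hsep w).and (hsep w'))).exists
  have hdiff := cornerDiff_assignmentConjugate φ hε hsepV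
  rw [hg, cornerDiff_assignmentConjugate φ' hε hsepV'] at hdiff
  exact_mod_cast (mul_left_cancel₀ (neg_ne_zero.mpr hε.ne') hdiff).symm

section Fibers

variable {α V V' M : Type*} [DecidableEq α] [Fintype V] [Fintype V'] [AddCommMonoid M]

lemma sum_fiber_of_injective {w : V → α} (hw : Injective w) (φ : V → M) (i : V) :
    ∑ j ∈ Finset.univ.filter (w · = w i), φ j = φ i := by
  rw [Finset.sum_eq_single_of_mem i (by simp)]
  intro j hj hji
  exact absurd (hw (Finset.mem_filter.mp hj).2) hji

lemma mem_range_iff_sum_fiber_pos [PartialOrder M] [IsOrderedCancelAddMonoid M] {w : V → α}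
    {φ : V → M} (hφ : ∀ i, 0 < φ i) (c : α) :
    c ∈ Set.range w ↔ 0 < ∑ i ∈ Finset.univ.filter (w · = c), φ i := by
  constructor
  · rintro ⟨i, rfl⟩
    exact Finset.sum_pos (fun j _ => hφ j) ⟨i, by simp⟩
  · intro hpos
    obtain ⟨i, hi, -⟩ := Finset.exists_ne_zero_of_sum_ne_zero hpos.ne'
    exact ⟨i, (Finset.mem_filter.mp hi).2⟩

lemma exists_equiv_of_sum_fiber_eq [PartialOrder M] [IsOrderedCancelAddMonoid M]
    {w : V → α} {w' : V' → α} {φ : V → M} {φ' : V' → M}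
    (hw : Injective w) (hw' : Injective w') (hφ : ∀ i, 0 < φ i) (hφ' : ∀ j, 0 < φ' j)
    (hfib : ∀ c, ∑ i ∈ Finset.univ.filter (w · = c), φ i =
      ∑ j ∈ Finset.univ.filter (w' · = c), φ' j) :
    ∃ σ : V ≃ V', ∀ i, w' (σ i) = w i ∧ φ' (σ i) = φ i := by
  have hrange : Set.range w = Set.range w' := Set.ext fun c => by
    rw [mem_range_iff_sum_fiber_pos hφ, mem_range_iff_sum_fiber_pos hφ', hfib]
  let σ : V ≃ V' := (Equiv.ofInjective w hw).trans
    ((Equiv.setCongr hrange).trans (Equiv.ofInjective w' hw').symm)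
  have hσ : ∀ i, w' (σ i) = w i := fun i => Equiv.apply_ofInjective_symm hw' _
  refine ⟨σ, fun i => ⟨hσ i, ?_⟩⟩
  have hi := hfib (w i)
  conv_rhs at hi => rw [← hσ i]
  rwa [sum_fiber_of_injective hw, sum_fiber_of_injective hw', eq_comm] at hi

end Fibers

theorem stmt9_general (Φ : ℤ) (f : (Fin 2 → ℤ) → ℝ)
    (V V' : Type) [Fintype V] [Fintype V']
    (w : V → Fin 2 → ℝ) (φ : V → ℤ) (w' : V' → Fin 2 → ℝ) (φ' : V' → ℤ)
    (h : IsAssignmentValuation Φ f V w φ) (h' : IsAssignmentValuation Φ f V' w' φ')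
    (hirr : ∀ i j : V, i ≠ j → w i ≠ w j)
    (hirr' : ∀ i j : V', i ≠ j → w' i ≠ w' j) :
    ∃ σ : V ≃ V', ∀ i : V, w' (σ i) = w i ∧ φ' (σ i) = φ i :=
  exists_equiv_of_sum_fiber_eq (fun i j => not_imp_not.mp (hirr i j))
    (fun i j => not_imp_not.mp (hirr' i j)) h.1 h'.1
    (sum_fiber_eq_of_assignmentConjugate_eq (h.assignmentConjugate_eq h'))

theorem stmt9 (Φ : ℤ) (hΦ : 0 < Φ) (f : (Fin 2 → ℤ) → ℝ)
    (V V' : Type) [Fintype V] [Fintype V']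
    (w : V → Fin 2 → ℝ) (φ : V → ℤ) (w' : V' → Fin 2 → ℝ) (φ' : V' → ℤ)
    (h : IsAssignmentValuation Φ f V w φ) (h' : IsAssignmentValuation Φ f V' w' φ')
    (hirr : ∀ i j : V, i ≠ j → w i ≠ w j)
    (hirr' : ∀ i j : V', i ≠ j → w' i ≠ w' j) :
    ∃ σ : V ≃ V', ∀ i : V, w' (σ i) = w i ∧ φ' (σ i) = φ i :=
  stmt9_general Φ f V V' w φ w' φ' h h' hirr hirr'
end

section
/- Let (V, w, φ) be an irreducible representation of a bivariate assignment valuation f : T_Φ → ℝ, and let p ∈ ℝ² be such that the maximizer set D_f(p) is two-dimensional. If p = (w(i_p,1), w(i_p,2)) for some i_p ∈ V, then D_f(p) is of positive-type, i_p is the unique vertex of V with p = (w(i_p,1), w(i_p,2)), and ℓ_LH(D_f(p)) − ℓ_UH(D_f(p)) = φ(i_p). -/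
open Finset

/-!
Subtracting `⟨p, ·⟩` decouples the vertices of `V`: with reduced weight `r_i = w(i) - p`,
vertex `i` independently places its `φ(i)` units on the face of the triangle `T_{φ(i)}`
maximizing `⟨r_i, ·⟩`, so `D_f(p)` is the Minkowski sum of these optimal faces. Each of
`λ₀, λ₁, λ₂, μ₀, μ₁, μ₂` is additive under Minkowski sums, hence so is `ℓ_LH - ℓ_UH`. It
vanishes on a vertex or an edge of `T_c` and equals `c` on `T_c` itself, which is the optimal
face exactly when `r_i = 0`; by irreducibility this happens only for `i = i_p`.
-/

open scoped Pointwise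

section MinkowskiSum

variable {ι X β : Type*} [Fintype ι] [AddCommMonoid X]

theorem isGreatest_image_fintype_sum [AddCommMonoid β] [PartialOrder β] [IsOrderedAddMonoid β]
    (g : X →+ β) {P : ι → Set X} {M : ι → β} (h : ∀ i, IsGreatest (g '' P i) (M i)) :
    IsGreatest (g '' ∑ i, P i) (∑ i, M i) := by
  choose x hx hgx using fun i => (h i).1
  refine ⟨⟨∑ i, x i, (Set.mem_fintype_sum _ _).2 ⟨x, hx, rfl⟩, by simp [map_sum, hgx]⟩, ?_⟩
  rintro _ ⟨_, hz, rfl⟩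
  obtain ⟨y, hy, rfl⟩ := (Set.mem_fintype_sum _ _).1 hz
  rw [map_sum]
  exact Finset.sum_le_sum fun i _ => (h i).2 ⟨y i, hy i, rfl⟩

theorem isLeast_image_fintype_sum [AddCommMonoid β] [PartialOrder β] [IsOrderedAddMonoid β]
    (g : X →+ β) {P : ι → Set X} {M : ι → β} (h : ∀ i, IsLeast (g '' P i) (M i)) :
    IsLeast (g '' ∑ i, P i) (∑ i, M i) :=
  isGreatest_image_fintype_sum (β := βᵒᵈ) g h

theorem csSup_image_fintype_sum (g : X →+ ℤ) {P : ι → Set X} (hfin : ∀ i, (P i).Finite)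
    (hne : ∀ i, (P i).Nonempty) : sSup (g '' ∑ i, P i) = ∑ i, sSup (g '' P i) :=
  (isGreatest_image_fintype_sum g fun i =>
    ⟨((hne i).image g).csSup_mem ((hfin i).image g),
      fun _ => le_csSup ((hfin i).image g).bddAbove⟩).csSup_eq

theorem csInf_image_fintype_sum (g : X →+ ℤ) {P : ι → Set X} (hfin : ∀ i, (P i).Finite)
    (hne : ∀ i, (P i).Nonempty) : sInf (g '' ∑ i, P i) = ∑ i, sInf (g '' P i) :=
  (isLeast_image_fintype_sum g fun i =>
    ⟨((hne i).image g).csInf_mem ((hfin i).image g),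
      fun _ => csInf_le ((hfin i).image g).bddBelow⟩).csInf_eq

end MinkowskiSum

theorem typeQ_fintype_sum {ι : Type*} [Fintype ι] {P : ι → Set (Fin 2 → ℤ)}
    (hfin : ∀ i, (P i).Finite) (hne : ∀ i, (P i).Nonempty) :
    typeQ (∑ i, P i) = ∑ i, typeQ (P i) := by
  let g₁ := Pi.evalAddMonoidHom (fun _ : Fin 2 => ℤ) 0
  let g₂ := Pi.evalAddMonoidHom (fun _ : Fin 2 => ℤ) 1
  simp only [typeQ, mu1, mu2, mu0, lam1, lam2, lam0]
  erw [csSup_image_fintype_sum g₁ hfin hne, csSup_image_fintype_sum g₂ hfin hne,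
    csSup_image_fintype_sum (g₁ + g₂) hfin hne, csInf_image_fintype_sum g₁ hfin hne,
    csInf_image_fintype_sum g₂ hfin hne, csInf_image_fintype_sum (g₁ + g₂) hfin hne]
  simp only [← Finset.sum_sub_distrib]
  rfl

theorem TPhi_finite (c : ℤ) : (TPhi c).Finite :=
  (Set.finite_Icc (0 : Fin 2 → ℤ) (fun _ => c)).subset fun u ⟨h₀, h₁, h⟩ =>
    ⟨fun j => by fin_cases j <;> simpa, fun j => by fin_cases j <;> simp <;> omega⟩

section TriangleFace

variable {c : ℤ} {o e₀ e₁ : Prop}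

/-- The face of `T_c` spanned by those of its vertices `0`, `c χ₁`, `c χ₂` whose flag
`o`, `e₀`, `e₁` holds. -/
def triangleFace (c : ℤ) (o e₀ e₁ : Prop) : Set (Fin 2 → ℤ) :=
  {u | u ∈ TPhi c ∧ (0 < u 0 → e₀) ∧ (0 < u 1 → e₁) ∧ (u 0 + u 1 < c → o)}

theorem zero_mem_triangleFace (hc : 0 ≤ c) (ho : o) : 0 ∈ triangleFace c o e₀ e₁ := by
  refine ⟨⟨?_, ?_, ?_⟩, ?_, ?_, ?_⟩ <;> simp [ho, hc]

theorem vertex_fst_mem_triangleFace (hc : 0 < c) (h₀ : e₀) :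
    ![c, 0] ∈ triangleFace c o e₀ e₁ := by
  refine ⟨⟨?_, ?_, ?_⟩, ?_, ?_, ?_⟩ <;> simp [h₀, hc.le]

theorem vertex_snd_mem_triangleFace (hc : 0 < c) (h₁ : e₁) :
    ![0, c] ∈ triangleFace c o e₀ e₁ := by
  refine ⟨⟨?_, ?_, ?_⟩, ?_, ?_, ?_⟩ <;> simp [h₁, hc.le]

theorem triangleFace_nonempty (hc : 0 < c) (hne : o ∨ e₀ ∨ e₁) :
    (triangleFace c o e₀ e₁).Nonempty := by
  rcases hne with ho | h₀ | h₁
  exacts [⟨0, zero_mem_triangleFace hc.le ho⟩, ⟨_, vertex_fst_mem_triangleFace hc h₀⟩,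
    ⟨_, vertex_snd_mem_triangleFace hc h₁⟩]

theorem exists_mem_triangleFace_fst_eq_zero (hc : 0 < c) (h : o ∨ e₁) :
    ∃ u ∈ triangleFace c o e₀ e₁, u 0 = 0 := by
  rcases h with ho | h₁
  · exact ⟨0, zero_mem_triangleFace hc.le ho, rfl⟩
  · exact ⟨_, vertex_snd_mem_triangleFace hc h₁, rfl⟩

theorem exists_mem_triangleFace_snd_eq_zero (hc : 0 < c) (h : o ∨ e₀) :
    ∃ u ∈ triangleFace c o e₀ e₁, u 1 = 0 := by
  rcases h with ho | h₀
  · exact ⟨0, zero_mem_triangleFace hc.le ho, rfl⟩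
  · exact ⟨_, vertex_fst_mem_triangleFace hc h₀, rfl⟩

theorem exists_mem_triangleFace_fst_add_snd_eq (hc : 0 < c) (h : e₀ ∨ e₁) :
    ∃ u ∈ triangleFace c o e₀ e₁, u 0 + u 1 = c := by
  rcases h with h₀ | h₁
  · exact ⟨_, vertex_fst_mem_triangleFace hc h₀, by simp⟩
  · exact ⟨_, vertex_snd_mem_triangleFace hc h₁, by simp⟩

open Classical

theorem isGreatest_fst_triangleFace (hc : 0 < c) (hne : o ∨ e₀ ∨ e₁) :
    IsGreatest ((fun u => u 0) '' triangleFace c o e₀ e₁) (if e₀ then c else 0) := by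
  refine ⟨?_, ?_⟩
  · split_ifs with h₀
    · exact ⟨_, vertex_fst_mem_triangleFace hc h₀, rfl⟩
    · exact exists_mem_triangleFace_fst_eq_zero hc (by tauto)
  · rintro _ ⟨u, ⟨⟨-, h₁, hs⟩, f₀, -, -⟩, rfl⟩
    split_ifs with h₀
    · dsimp only; omega
    · exact not_lt.1 (mt f₀ h₀)

theorem isLeast_fst_triangleFace (hc : 0 < c) (hne : o ∨ e₀ ∨ e₁) :
    IsLeast ((fun u => u 0) '' triangleFace c o e₀ e₁) (if o ∨ e₁ then 0 else c) := by
  refine ⟨?_, ?_⟩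
  · split_ifs with h
    · exact exists_mem_triangleFace_fst_eq_zero hc h
    · exact ⟨_, vertex_fst_mem_triangleFace hc (by tauto), rfl⟩
  · rintro _ ⟨u, ⟨⟨h₀, h₁, -⟩, -, f₁, fo⟩, rfl⟩
    split_ifs with h
    · exact h₀
    · have := not_lt.1 (mt f₁ (by tauto))
      have := not_lt.1 (mt fo (by tauto))
      dsimp only; omega

theorem isGreatest_snd_triangleFace (hc : 0 < c) (hne : o ∨ e₀ ∨ e₁) :
    IsGreatest ((fun u => u 1) '' triangleFace c o e₀ e₁) (if e₁ then c else 0) := by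
  refine ⟨?_, ?_⟩
  · split_ifs with h₁
    · exact ⟨_, vertex_snd_mem_triangleFace hc h₁, rfl⟩
    · exact exists_mem_triangleFace_snd_eq_zero hc (by tauto)
  · rintro _ ⟨u, ⟨⟨h₀, -, hs⟩, -, f₁, -⟩, rfl⟩
    split_ifs with h₁
    · dsimp only; omega
    · exact not_lt.1 (mt f₁ h₁)

theorem isLeast_snd_triangleFace (hc : 0 < c) (hne : o ∨ e₀ ∨ e₁) :
    IsLeast ((fun u => u 1) '' triangleFace c o e₀ e₁) (if o ∨ e₀ then 0 else c) := by
  refine ⟨?_, ?_⟩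
  · split_ifs with h
    · exact exists_mem_triangleFace_snd_eq_zero hc h
    · exact ⟨_, vertex_snd_mem_triangleFace hc (by tauto), rfl⟩
  · rintro _ ⟨u, ⟨⟨h₀, h₁, -⟩, f₀, -, fo⟩, rfl⟩
    split_ifs with h
    · exact h₁
    · have := not_lt.1 (mt f₀ (by tauto))
      have := not_lt.1 (mt fo (by tauto))
      dsimp only; omega

theorem isGreatest_fst_add_snd_triangleFace (hc : 0 < c) (hne : o ∨ e₀ ∨ e₁) :
    IsGreatest ((fun u => u 0 + u 1) '' triangleFace c o e₀ e₁)
      (if e₀ ∨ e₁ then c else 0) := by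
  refine ⟨?_, ?_⟩
  · split_ifs with h
    · exact exists_mem_triangleFace_fst_add_snd_eq hc h
    · exact ⟨0, zero_mem_triangleFace hc.le (by tauto), by simp⟩
  · rintro _ ⟨u, ⟨⟨-, -, hs⟩, f₀, f₁, -⟩, rfl⟩
    split_ifs with h
    · exact hs
    · have := not_lt.1 (mt f₀ (by tauto))
      have := not_lt.1 (mt f₁ (by tauto))
      dsimp only; omega

theorem isLeast_fst_add_snd_triangleFace (hc : 0 < c) (hne : o ∨ e₀ ∨ e₁) :
    IsLeast ((fun u => u 0 + u 1) '' triangleFace c o e₀ e₁) (if o then 0 else c) := by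
  refine ⟨?_, ?_⟩
  · split_ifs with ho
    · exact ⟨0, zero_mem_triangleFace hc.le ho, by simp⟩
    · exact exists_mem_triangleFace_fst_add_snd_eq hc (by tauto)
  · rintro _ ⟨u, ⟨⟨h₀, h₁, -⟩, -, -, fo⟩, rfl⟩
    split_ifs with ho
    · dsimp only; omega
    · exact not_lt.1 (mt fo ho)

theorem typeQ_triangleFace (hc : 0 < c) (hne : o ∨ e₀ ∨ e₁) :
    typeQ (triangleFace c o e₀ e₁) = if o ∧ e₀ ∧ e₁ then c else 0 := by
  rw [typeQ, mu1, mu2, mu0, lam1, lam2, lam0, (isGreatest_fst_triangleFace hc hne).csSup_eq,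
    (isGreatest_snd_triangleFace hc hne).csSup_eq,
    (isGreatest_fst_add_snd_triangleFace hc hne).csSup_eq,
    (isLeast_fst_triangleFace hc hne).csInf_eq, (isLeast_snd_triangleFace hc hne).csInf_eq,
    (isLeast_fst_add_snd_triangleFace hc hne).csInf_eq]
  split_ifs <;> first | omega | tauto

end TriangleFace

/-- The largest value of `⟨r, ·⟩` on the vertices `0`, `χ₁`, `χ₂` of `T_1`. -/
noncomputable def maxGain (r : Fin 2 → ℝ) : ℝ := max (max (r 0) (r 1)) 0

def optimalFace (r : Fin 2 → ℝ) (c : ℤ) : Set (Fin 2 → ℤ) :=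
  {u | u ∈ TPhi c ∧ inner2 r u = c * maxGain r}

section OptimalFace

variable {r : Fin 2 → ℝ} {c : ℤ} {u : Fin 2 → ℤ}

theorem le_maxGain_fst (r : Fin 2 → ℝ) : r 0 ≤ maxGain r :=
  (le_max_left _ _).trans (le_max_left _ _)

theorem le_maxGain_snd (r : Fin 2 → ℝ) : r 1 ≤ maxGain r :=
  (le_max_right _ _).trans (le_max_left _ _)

theorem maxGain_nonneg (r : Fin 2 → ℝ) : 0 ≤ maxGain r := le_max_right _ _

theorem maxGain_eq_zero_or (r : Fin 2 → ℝ) :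
    maxGain r = 0 ∨ maxGain r = r 0 ∨ maxGain r = r 1 := by
  unfold maxGain
  rcases max_choice (max (r 0) (r 1)) 0 with h | h <;> rw [h]
  · rcases max_choice (r 0) (r 1) with h' | h' <;> rw [h'] <;> simp
  · simp

theorem cast_nonneg_of_mem_TPhi (hu : u ∈ TPhi c) :
    (0 : ℝ) ≤ u 0 ∧ (0 : ℝ) ≤ u 1 ∧ (0 : ℝ) ≤ c - u 0 - u 1 := by
  obtain ⟨h₀, h₁, hs⟩ := hu
  refine ⟨by exact_mod_cast h₀, by exact_mod_cast h₁, ?_⟩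
  rw [sub_sub, sub_nonneg]
  exact_mod_cast hs

-- The barycentric coordinates of `u` in `T_c`, weighted by the deficits of the vertices.
theorem mul_maxGain_sub_inner2 (r : Fin 2 → ℝ) (c : ℤ) (u : Fin 2 → ℤ) :
    c * maxGain r - inner2 r u =
      u 0 * (maxGain r - r 0) + u 1 * (maxGain r - r 1) + (c - u 0 - u 1) * maxGain r := by
  unfold inner2; ring

theorem inner2_le_mul_maxGain (hu : u ∈ TPhi c) : inner2 r u ≤ c * maxGain r := by
  obtain ⟨h₀, h₁, hs⟩ := cast_nonneg_of_mem_TPhi hu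
  rw [← sub_nonneg, mul_maxGain_sub_inner2]
  exact add_nonneg (add_nonneg (mul_nonneg h₀ (sub_nonneg.2 (le_maxGain_fst r)))
    (mul_nonneg h₁ (sub_nonneg.2 (le_maxGain_snd r)))) (mul_nonneg hs (maxGain_nonneg r))

theorem optimalFace_eq_triangleFace (r : Fin 2 → ℝ) (c : ℤ) :
    optimalFace r c = triangleFace c (maxGain r = 0) (maxGain r = r 0) (maxGain r = r 1) := by
  have zero_iff {a b : ℝ} (ha : 0 ≤ a) : a * b = 0 ↔ (0 < a → b = 0) := by
    rw [mul_eq_zero, or_iff_not_imp_left, ha.lt_iff_ne, ne_comm]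
  ext u
  refine and_congr_right fun hu => ?_
  obtain ⟨h₀, h₁, hs⟩ := cast_nonneg_of_mem_TPhi hu
  have t₀ := mul_nonneg h₀ (sub_nonneg.2 (le_maxGain_fst r))
  have t₁ := mul_nonneg h₁ (sub_nonneg.2 (le_maxGain_snd r))
  rw [eq_comm, ← sub_eq_zero, mul_maxGain_sub_inner2,
    add_eq_zero_iff_of_nonneg (add_nonneg t₀ t₁) (mul_nonneg hs (maxGain_nonneg r)),
    add_eq_zero_iff_of_nonneg t₀ t₁, zero_iff h₀, zero_iff h₁, zero_iff hs]
  simp only [Int.cast_pos, sub_eq_zero, sub_sub, sub_pos, and_assoc]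
  norm_cast

theorem optimalFace_finite : (optimalFace r c).Finite :=
  (TPhi_finite c).subset fun _ hu => hu.1

theorem optimalFace_nonempty (hc : 0 < c) : (optimalFace r c).Nonempty := by
  rw [optimalFace_eq_triangleFace]
  exact triangleFace_nonempty hc (maxGain_eq_zero_or r)

open Classical in
theorem typeQ_optimalFace (hc : 0 < c) : typeQ (optimalFace r c) = if r = 0 then c else 0 := by
  rw [optimalFace_eq_triangleFace, typeQ_triangleFace hc (maxGain_eq_zero_or r)]
  congr 1
  refine propext ⟨fun ⟨h, h₀, h₁⟩ => ?_, fun hr => ?_⟩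
  · ext j; fin_cases j <;> simp [← h₀, ← h₁, h]
  · simp [maxGain, hr]

end OptimalFace

theorem inner2_sub (q p : Fin 2 → ℝ) (u : Fin 2 → ℤ) :
    inner2 (q - p) u = inner2 q u - inner2 p u := by
  simp only [inner2, Pi.sub_apply]; ring

theorem inner2_sum {ι : Type*} (s : Finset ι) (p : Fin 2 → ℝ) (y : ι → Fin 2 → ℤ) :
    inner2 p (∑ i ∈ s, y i) = ∑ i ∈ s, inner2 p (y i) := by
  simp only [inner2, Finset.sum_apply, Int.cast_sum, Finset.mul_sum, Finset.sum_add_distrib]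

section AssignmentValuation

variable {V : Type} [Fintype V] {Φ : ℤ} {f : (Fin 2 → ℤ) → ℝ} {w : V → Fin 2 → ℝ}
  {φ : V → ℤ} {x : Fin 2 → ℤ} {y : V → Fin 2 → ℤ}

theorem feasibleAssign_iff :
    FeasibleAssign φ x y ↔ (∀ i, y i ∈ TPhi (φ i)) ∧ ∑ i, y i = x := by
  simp only [FeasibleAssign, TPhi, Set.mem_ofPred_eq, funext_iff, Finset.sum_apply,
    Fin.forall_fin_two, forall_and]
  tauto

theorem sum_mem_TPhi (hy : ∀ i, y i ∈ TPhi (φ i)) : ∑ i, y i ∈ TPhi (∑ i, φ i) := by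
  simp only [TPhi, Set.mem_ofPred_eq, Finset.sum_apply, ← Finset.sum_add_distrib]
  exact ⟨Finset.sum_nonneg fun i _ => (hy i).1, Finset.sum_nonneg fun i _ => (hy i).2.1,
    Finset.sum_le_sum fun i _ => (hy i).2.2⟩

theorem IsAssignmentValuation.isGreatest_sub_inner2 (h : IsAssignmentValuation Φ f V w φ)
    (p : Fin 2 → ℝ) (hx : x ∈ TPhi Φ) :
    IsGreatest {s | ∃ y : V → Fin 2 → ℤ, (∀ i, y i ∈ TPhi (φ i)) ∧ ∑ i, y i = x ∧
      s = ∑ i, inner2 (w i - p) (y i)} (f x - inner2 p x) := by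
  have reduce : ∀ y : V → Fin 2 → ℤ, ∑ i, y i = x →
      ∑ i, (w i 0 * (y i 0 : ℝ) + w i 1 * (y i 1 : ℝ)) - inner2 p x =
        ∑ i, inner2 (w i - p) (y i) := by
    rintro y rfl
    simp only [inner2_sub, Finset.sum_sub_distrib, inner2_sum]
    rfl
  obtain ⟨⟨y, hy, hfx⟩, hmax⟩ := h.2.2 x hx
  rw [feasibleAssign_iff] at hy
  refine ⟨⟨y, hy.1, hy.2, by rw [hfx, reduce y hy.2]⟩, ?_⟩
  rintro _ ⟨z, hz, hzx, rfl⟩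
  rw [← reduce z hzx]
  exact sub_le_sub_right (hmax ⟨z, feasibleAssign_iff.2 ⟨hz, hzx⟩, rfl⟩) _

theorem IsAssignmentValuation.maximizerSet_eq (h : IsAssignmentValuation Φ f V w φ)
    (p : Fin 2 → ℝ) : maximizerSet Φ f p = ∑ i, optimalFace (w i - p) (φ i) := by
  have le_top : ∀ x ∈ TPhi Φ, f x - inner2 p x ≤ ∑ i, (φ i : ℝ) * maxGain (w i - p) := by
    intro x hx
    obtain ⟨y, hy, -, hfx⟩ := (h.isGreatest_sub_inner2 p hx).1
    rw [hfx]
    exact Finset.sum_le_sum fun i _ => inner2_le_mul_maxGain (hy i)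
  have top_le : ∀ y : V → Fin 2 → ℤ, (∀ i, y i ∈ optimalFace (w i - p) (φ i)) →
      ∑ i, y i ∈ TPhi Φ ∧
        ∑ i, (φ i : ℝ) * maxGain (w i - p) ≤ f (∑ i, y i) - inner2 p (∑ i, y i) := by
    intro y hy
    have hx : ∑ i, y i ∈ TPhi Φ := h.2.1 ▸ sum_mem_TPhi fun i => (hy i).1
    exact ⟨hx, (h.isGreatest_sub_inner2 p hx).2
      ⟨y, fun i => (hy i).1, rfl, Finset.sum_congr rfl fun i _ => (hy i).2.symm⟩⟩
  ext x
  rw [Set.mem_fintype_sum]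
  constructor
  · rintro ⟨hx, hmax⟩
    choose y₀ hy₀ using fun i => optimalFace_nonempty (r := w i - p) (h.1 i)
    obtain ⟨y, hy, rfl, hfx⟩ := (h.isGreatest_sub_inner2 p hx).1
    have hle : ∀ i ∈ Finset.univ, inner2 (w i - p) (y i) ≤ φ i * maxGain (w i - p) :=
      fun i _ => inner2_le_mul_maxGain (hy i)
    have heq := le_antisymm (Finset.sum_le_sum hle)
      (hfx ▸ (top_le y₀ hy₀).2.trans (hmax _ (top_le y₀ hy₀).1))
    exact ⟨y, fun i => ⟨hy i, (Finset.sum_eq_sum_iff_of_le hle).1 heq i (Finset.mem_univ i)⟩,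
      rfl⟩
  · rintro ⟨y, hy, rfl⟩
    exact ⟨(top_le y hy).1, fun z hz => (le_top z hz).trans (top_le y hy).2⟩

end AssignmentValuation

theorem stmt11_general (Φ : ℤ) (f : (Fin 2 → ℤ) → ℝ) (V : Type) [Fintype V]
    (w : V → Fin 2 → ℝ) (φ : V → ℤ) (h : IsAssignmentValuation Φ f V w φ)
    (hirr : ∀ i j : V, i ≠ j → w i ≠ w j)
    (p : Fin 2 → ℝ)
    (ip : V) (hip : p = w ip) :
    0 < typeQ (maximizerSet Φ f p) ∧
    (∀ j : V, p = w j → j = ip) ∧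
    typeQ (maximizerSet Φ f p) = φ ip := by
  have huniq : ∀ j : V, p = w j → j = ip :=
    fun j hj => by_contra fun hne => hirr j ip hne (hj.symm.trans hip)
  have hQ : typeQ (maximizerSet Φ f p) = φ ip := by
    rw [h.maximizerSet_eq p, typeQ_fintype_sum (fun _ => optimalFace_finite)
      fun i => optimalFace_nonempty (h.1 i)]
    simp only [typeQ_optimalFace (h.1 _)]
    rw [Finset.sum_eq_single_of_mem ip (Finset.mem_univ ip) fun i _ hi =>
      if_neg fun hi₀ => hi (huniq i (sub_eq_zero.1 hi₀).symm), if_pos (sub_eq_zero.2 hip.symm)]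
  exact ⟨hQ ▸ h.1 ip, huniq, hQ⟩

theorem stmt11 (Φ : ℤ) (hΦ : 0 < Φ) (f : (Fin 2 → ℤ) → ℝ) (V : Type) [Fintype V]
    (w : V → Fin 2 → ℝ) (φ : V → ℤ) (h : IsAssignmentValuation Φ f V w φ)
    (hirr : ∀ i j : V, i ≠ j → w i ≠ w j)
    (p : Fin 2 → ℝ) (h2 : TwoDimensional (maximizerSet Φ f p))
    (ip : V) (hip : p = w ip) :
    0 < typeQ (maximizerSet Φ f p) ∧
    (∀ j : V, p = w j → j = ip) ∧
    typeQ (maximizerSet Φ f p) = φ ip :=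
  stmt11_general Φ f V w φ h hirr p ip hip
end
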